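/- Let K = ℂ(x₁,x₂,x₃,y₁,y₂,y₃). Define s₁ as above, s₂ = ρ s₁ ρ⁻¹, where ρ is the automorphism with ρ(xᵢ)=x_{i+1}, ρ(yᵢ)=y_{i+1} (indices mod 3). Then s₁ and s₂ satisfy the braid relation s₁ s₂ s₁ = s₂ s₁ s₂. -/

import Mathlib

noncomputable section

/-- The rational function field `ℂ(x₁,x₂,x₃,y₁,y₂,y₃)`. -/
abbrev K : Type := FractionRing (MvPolynomial (Fin 6) ℂ)

/-- The generators of `K`. -/
def X (i : Fin 6) : K := algebraMap (MvPolynomial (Fin 6) ℂ) K (MvPolynomial.X i)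

def x1 : K := X 0
def x2 : K := X 1
def x3 : K := X 2
def y1 : K := X 3
def y2 : K := X 4
def y3 : K := X 5

lemma ne_zero_of_eval (p : MvPolynomial (Fin 6) ℂ)
    (h : MvPolynomial.eval (fun _ => (1:ℂ)) p ≠ 0) :
    algebraMap (MvPolynomial (Fin 6) ℂ) K p ≠ 0 := by
  intro h0
  apply h
  have hp : p = 0 := IsFractionRing.injective (MvPolynomial (Fin 6) ℂ) K (by rw [map_zero]; exact h0)
  rw [hp, map_zero]

set_option maxHeartbeats 2000000 in
set_option synthInstance.maxHeartbeats 1000000 in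
/-- with `ρ` the cyclic shift of indices and `s₂ = ρ ∘ s₁ ∘ ρ⁻¹`,
the braid relation `s₁ s₂ s₁ = s₂ s₁ s₂` holds. -/
theorem stmt6 (s₁ ρ s₂ : K ≃ₐ[ℂ] K)
    (hs1 : s₁ x1 = x2 * (x1 + y2) / (x2 + y1))
    (hs2 : s₁ x2 = x1 * (x2 + y1) / (x1 + y2))
    (hs3 : s₁ x3 = x3)
    (hs4 : s₁ y1 = y2 * (x2 + y1) / (x1 + y2))
    (hs5 : s₁ y2 = y1 * (x1 + y2) / (x2 + y1))
    (hs6 : s₁ y3 = y3)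
    (hρ1 : ρ x1 = x2) (hρ2 : ρ x2 = x3) (hρ3 : ρ x3 = x1)
    (hρ4 : ρ y1 = y2) (hρ5 : ρ y2 = y3) (hρ6 : ρ y3 = y1)
    (hs₂ : ∀ k : K, s₂ k = ρ (s₁ (ρ.symm k))) :
    ∀ k : K, s₁ (s₂ (s₁ k)) = s₂ (s₁ (s₂ k)) := by
  -- nonzero facts
  have h12 : x1 + y2 ≠ 0 := by
    have e : (algebraMap (MvPolynomial (Fin 6) ℂ) K) ((MvPolynomial.X 0) + (MvPolynomial.X 4) : MvPolynomial (Fin 6) ℂ) = x1 + y2 := by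
      simp only [map_add, map_mul]; rfl
    rw [← e]
    exact ne_zero_of_eval _ (by simp <;> norm_num)
  have h21 : x2 + y1 ≠ 0 := by
    have e : (algebraMap (MvPolynomial (Fin 6) ℂ) K) ((MvPolynomial.X 1) + (MvPolynomial.X 3) : MvPolynomial (Fin 6) ℂ) = x2 + y1 := by
      simp only [map_add, map_mul]; rfl
    rw [← e]
    exact ne_zero_of_eval _ (by simp <;> norm_num)
  have h32 : x3 + y2 ≠ 0 := by
    have e : (algebraMap (MvPolynomial (Fin 6) ℂ) K) ((MvPolynomial.X 2) + (MvPolynomial.X 4) : MvPolynomial (Fin 6) ℂ) = x3 + y2 := by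
      simp only [map_add, map_mul]; rfl
    rw [← e]
    exact ne_zero_of_eval _ (by simp <;> norm_num)
  have h23 : x2 + y3 ≠ 0 := by
    have e : (algebraMap (MvPolynomial (Fin 6) ℂ) K) ((MvPolynomial.X 1) + (MvPolynomial.X 5) : MvPolynomial (Fin 6) ℂ) = x2 + y3 := by
      simp only [map_add, map_mul]; rfl
    rw [← e]
    exact ne_zero_of_eval _ (by simp <;> norm_num)
  have hA : x1*x2 + x1*y1 + x1*y3 + y2*y3 ≠ 0 := by
    have e : (algebraMap (MvPolynomial (Fin 6) ℂ) K) ((MvPolynomial.X 0)*(MvPolynomial.X 1) + (MvPolynomial.X 0)*(MvPolynomial.X 3) + (MvPolynomial.X 0)*(MvPolynomial.X 5) + (MvPolynomial.X 4)*(MvPolynomial.X 5) : MvPolynomial (Fin 6) ℂ) = x1*x2 + x1*y1 + x1*y3 + y2*y3 := by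
      simp only [map_add, map_mul]; rfl
    rw [← e]
    exact ne_zero_of_eval _ (by simp <;> norm_num)
  have hB : x1*y1 + x2*x3 + x3*y1 + y1*y2 ≠ 0 := by
    have e : (algebraMap (MvPolynomial (Fin 6) ℂ) K) ((MvPolynomial.X 0)*(MvPolynomial.X 3) + (MvPolynomial.X 1)*(MvPolynomial.X 2) + (MvPolynomial.X 2)*(MvPolynomial.X 3) + (MvPolynomial.X 3)*(MvPolynomial.X 4) : MvPolynomial (Fin 6) ℂ) = x1*y1 + x2*x3 + x3*y1 + y1*y2 := by
      simp only [map_add, map_mul]; rfl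
    rw [← e]
    exact ne_zero_of_eval _ (by simp <;> norm_num)
  have hC : x1*x2 + x1*y3 + x3*y3 + y2*y3 ≠ 0 := by
    have e : (algebraMap (MvPolynomial (Fin 6) ℂ) K) ((MvPolynomial.X 0)*(MvPolynomial.X 1) + (MvPolynomial.X 0)*(MvPolynomial.X 5) + (MvPolynomial.X 2)*(MvPolynomial.X 5) + (MvPolynomial.X 4)*(MvPolynomial.X 5) : MvPolynomial (Fin 6) ℂ) = x1*x2 + x1*y3 + x3*y3 + y2*y3 := by
      simp only [map_add, map_mul]; rfl
    rw [← e]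
    exact ne_zero_of_eval _ (by simp <;> norm_num)
  have hD : x2*x3 + x3*y1 + x3*y3 + y1*y2 ≠ 0 := by
    have e : (algebraMap (MvPolynomial (Fin 6) ℂ) K) ((MvPolynomial.X 1)*(MvPolynomial.X 2) + (MvPolynomial.X 2)*(MvPolynomial.X 3) + (MvPolynomial.X 2)*(MvPolynomial.X 5) + (MvPolynomial.X 3)*(MvPolynomial.X 4) : MvPolynomial (Fin 6) ℂ) = x2*x3 + x3*y1 + x3*y3 + y1*y2 := by
      simp only [map_add, map_mul]; rfl
    rw [← e]
    exact ne_zero_of_eval _ (by simp <;> norm_num)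
  -- values of ρ.symm on generators
  have hr1 : ρ.symm x1 = x3 := by rw [← hρ3, AlgEquiv.symm_apply_apply]
  have hr2 : ρ.symm x2 = x1 := by rw [← hρ1, AlgEquiv.symm_apply_apply]
  have hr3 : ρ.symm x3 = x2 := by rw [← hρ2, AlgEquiv.symm_apply_apply]
  have hr4 : ρ.symm y1 = y3 := by rw [← hρ6, AlgEquiv.symm_apply_apply]
  have hr5 : ρ.symm y2 = y1 := by rw [← hρ4, AlgEquiv.symm_apply_apply]
  have hr6 : ρ.symm y3 = y2 := by rw [← hρ5, AlgEquiv.symm_apply_apply]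
  -- values of s₂ on generators
  have t1 : s₂ x1 = x1 := by rw [hs₂, hr1, hs3, hρ3]
  have t2 : s₂ x2 = x3 * (x2 + y3) / (x3 + y2) := by
    rw [hs₂, hr2, hs1, map_div₀, map_mul, map_add, map_add, hρ1, hρ2, hρ4, hρ5]
  have t3 : s₂ x3 = x2 * (x3 + y2) / (x2 + y3) := by
    rw [hs₂, hr3, hs2, map_div₀, map_mul, map_add, map_add, hρ1, hρ2, hρ4, hρ5]
  have t4 : s₂ y1 = y1 := by rw [hs₂, hr4, hs6, hρ6]
  have t5 : s₂ y2 = y3 * (x3 + y2) / (x2 + y3) := by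
    rw [hs₂, hr5, hs4, map_div₀, map_mul, map_add, map_add, hρ1, hρ2, hρ4, hρ5]
  have t6 : s₂ y3 = y2 * (x2 + y3) / (x3 + y2) := by
    rw [hs₂, hr6, hs5, map_div₀, map_mul, map_add, map_add, hρ1, hρ2, hρ4, hρ5]
  -- compound values of s₁
  have c1 : s₁ (x2 + y3) = (x1*x2 + x1*y1 + x1*y3 + y2*y3) / (x1 + y2) := by
    rw [map_add, hs2, hs6]
    field_simp
    ring
  have c2 : s₁ (x3 + y2) = (x1*y1 + x2*x3 + x3*y1 + y1*y2) / (x2 + y1) := by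
    rw [map_add, hs3, hs5]
    field_simp
    ring
  have c3 : s₁ (x1*x2 + x1*y3 + x3*y3 + y2*y3) = x1*x2 + x1*y3 + x3*y3 + y2*y3 := by
    simp only [map_add, map_mul, hs1, hs2, hs3, hs5, hs6]
    field_simp
    ring
  have c4 : s₁ (x2*x3 + x3*y1 + x3*y3 + y1*y2) = x2*x3 + x3*y1 + x3*y3 + y1*y2 := by
    simp only [map_add, map_mul, hs2, hs3, hs4, hs5, hs6]
    field_simp
  -- compound values of s₂
  have d1 : s₂ (x2 + y1) = (x2*x3 + x3*y1 + x3*y3 + y1*y2) / (x3 + y2) := by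
    rw [map_add, t2, t4]
    field_simp
    ring
  have d2 : s₂ (x1 + y2) = (x1*x2 + x1*y3 + x3*y3 + y2*y3) / (x2 + y3) := by
    rw [map_add, t1, t5]
    field_simp
    ring
  have d3 : s₂ (x1*x2 + x1*y1 + x1*y3 + y2*y3) = x1*x2 + x1*y1 + x1*y3 + y2*y3 := by
    simp only [map_add, map_mul, t1, t2, t4, t5, t6]
    field_simp
    ring
  have d4 : s₂ (x1*y1 + x2*x3 + x3*y1 + y1*y2) = x1*y1 + x2*x3 + x3*y1 + y1*y2 := by
    simp only [map_add, map_mul, t1, t2, t3, t4, t5]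
    field_simp
    ring
  -- the six generator computations
  have hA1 : x1 * (x2 + y1 + y3) + y3 * y2 ≠ 0 := by convert hA using 1; ring
  have hA2 : x1 * (x2 + y1 + y3) + y2 * y3 ≠ 0 := by convert hA using 1; ring
  have hB1 : x1 * y1 + x3 * x2 + x3 * y1 + y1 * y2 ≠ 0 := by convert hB using 1; ring
  have hB2 : x1 * y1 + x2 * x3 + y1 * x3 + y1 * y2 ≠ 0 := by convert hB using 1; ring
  have hB3 : y1 * x1 + x2 * x3 + y1 * x3 + y1 * y2 ≠ 0 := by convert hB using 1; ring
  have hC1 : x1 * (x2 + y3) + x3 * y3 + y3 * y2 ≠ 0 := by convert hC using 1; ring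
  have hC2 : x1 * (x2 + y3) + x3 * y3 + y2 * y3 ≠ 0 := by convert hC using 1; ring
  have hC3 : x1 * (x2 + y3) + y3 * x3 + y3 * y2 ≠ 0 := by convert hC using 1; ring
  have hC4 : x1 * (x2 + y3) + y3 * x3 + y2 * y3 ≠ 0 := by convert hC using 1; ring
  have hD1 : x3 * (x2 + y1 + y3) + y1 * y2 ≠ 0 := by convert hD using 1; ring
  have hD2 : (x2 + y1 + y3) * x3 + y1 * y2 ≠ 0 := by convert hD using 1; ring
  have k1 : s₁ (s₂ (s₁ x1)) = s₂ (s₁ (s₂ x1)) := by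
    simp only [hs1, hs2, hs3, hs4, hs5, hs6, t1, t2, t3, t4, t5, t6,
      c1, c2, c3, c4, d1, d2, d3, d4, map_div₀, map_mul]
    field_simp
  have k2 : s₁ (s₂ (s₁ x2)) = s₂ (s₁ (s₂ x2)) := by
    simp only [hs1, hs2, hs3, hs4, hs5, hs6, t1, t2, t3, t4, t5, t6,
      c1, c2, c3, c4, d1, d2, d3, d4, map_div₀, map_mul]
    field_simp
  have k3 : s₁ (s₂ (s₁ x3)) = s₂ (s₁ (s₂ x3)) := by
    simp only [hs1, hs2, hs3, hs4, hs5, hs6, t1, t2, t3, t4, t5, t6,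
      c1, c2, c3, c4, d1, d2, d3, d4, map_div₀, map_mul]
    field_simp
  have k4 : s₁ (s₂ (s₁ y1)) = s₂ (s₁ (s₂ y1)) := by
    simp only [hs1, hs2, hs3, hs4, hs5, hs6, t1, t2, t3, t4, t5, t6,
      c1, c2, c3, c4, d1, d2, d3, d4, map_div₀, map_mul]
    field_simp
  have k5 : s₁ (s₂ (s₁ y2)) = s₂ (s₁ (s₂ y2)) := by
    simp only [hs1, hs2, hs3, hs4, hs5, hs6, t1, t2, t3, t4, t5, t6,
      c1, c2, c3, c4, d1, d2, d3, d4, map_div₀, map_mul]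
    field_simp
  have k6 : s₁ (s₂ (s₁ y3)) = s₂ (s₁ (s₂ y3)) := by
    simp only [hs1, hs2, hs3, hs4, hs5, hs6, t1, t2, t3, t4, t5, t6,
      c1, c2, c3, c4, d1, d2, d3, d4, map_div₀, map_mul]
    field_simp
  -- extension to all of K
  have H : (s₁.toAlgHom.comp (s₂.toAlgHom.comp s₁.toAlgHom)) =
      (s₂.toAlgHom.comp (s₁.toAlgHom.comp s₂.toAlgHom)) := by
    apply AlgHom.coe_ringHom_injective
    apply IsLocalization.ringHom_ext (nonZeroDivisors (MvPolynomial (Fin 6) ℂ))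
    apply MvPolynomial.ringHom_ext
    · intro c
      simp only [RingHom.coe_comp, Function.comp_apply, ← MvPolynomial.algebraMap_eq,
        ← IsScalarTower.algebraMap_apply]
      simp [AlgHom.commutes]
    · intro i
      have : ∀ j : Fin 6, s₁ (s₂ (s₁ (X j))) = s₂ (s₁ (s₂ (X j))) := by
        intro j
        fin_cases j
        · exact k1
        · exact k2
        · exact k3
        · exact k4
        · exact k5
        · exact k6
      simpa [X] using this i
  intro k
  exact DFunLike.congr_fun H k
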